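/- arXiv:1408.0546 — 5 statements merged into one kernel-verified Lean document; each statement's English description precedes it below -/
import Mathlib

section
/- Let C be a class of groups stable under isomorphisms and under extensions (if N is a normal subgroup of G with N and G/N in C, then G is in C). If 1 → N → G → Q → 1 is a short exact sequence of groups where both N and Q satisfy the Tits alternative relative to C, then G satisfies the Tits alternative relative to C. -/
/-- A group contains a free subgroup of rank two. -/
def HasFreeSubgroupRankTwo (G : Type*) [Group G] : Prop :=
  ∃ f : FreeGroup (Fin 2) →* G, Function.Injective f

/-- `G` satisfies the Tits alternative relative to a class `C` of groups:
every subgroup of `G` either belongs to `C` or contains a free subgroup of rank two. -/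
def SatisfiesTitsAlternativeRel (C : (H : Type u) → [inst : Group H] → Prop)
    (G : Type u) [Group G] : Prop :=
  ∀ H : Subgroup G, C H ∨ HasFreeSubgroupRankTwo H

/-- Free subgroups push forward along injective homomorphisms. -/
lemma HasFreeSubgroupRankTwo.of_injective {A B : Type*} [Group A] [Group B]
    (g : A →* B) (hg : Function.Injective g) (h : HasFreeSubgroupRankTwo A) :
    HasFreeSubgroupRankTwo B := by
  obtain ⟨f, hf⟩ := h
  exact ⟨g.comp f, hg.comp hf⟩

/-- Free subgroups lift along surjective homomorphisms. -/
lemma HasFreeSubgroupRankTwo.of_surjective {A B : Type*} [Group A] [Group B]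
    (g : A →* B) (hg : Function.Surjective g) (h : HasFreeSubgroupRankTwo B) :
    HasFreeSubgroupRankTwo A := by
  obtain ⟨f, hf⟩ := h
  choose s hs using fun i : Fin 2 => hg (f (FreeGroup.of i))
  refine ⟨FreeGroup.lift s, ?_⟩
  have key : g.comp (FreeGroup.lift s) = f := by
    apply FreeGroup.ext_hom
    intro i
    simp [hs]
  have : Function.Injective (g.comp (FreeGroup.lift s)) := key ▸ hf
  exact fun x y hxy => this (by simp [hxy])

/-- The Tits alternative relative to a class `C` that is stable under isomorphisms and
extensions is itself stable under extensions: if `1 → N → G → Q → 1` is exact and both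
`N` and `Q` satisfy the Tits alternative relative to `C`, then so does `G`. -/
theorem titsAlternative_stable_under_extensions
    (C : (H : Type u) → [inst : Group H] → Prop)
    (hiso : ∀ (A B : Type u) [Group A] [Group B], (A ≃* B) → C A → C B)
    (hext : ∀ (A : Type u) [Group A] (N : Subgroup A) [N.Normal],
      C N → C (A ⧸ N) → C A)
    (N G Q : Type u) [Group N] [Group G] [Group Q]
    (ι : N →* G) (π : G →* Q)
    (hι : Function.Injective ι) (hπ : Function.Surjective π)
    (hexact : ι.range = π.ker)
    (hN : SatisfiesTitsAlternativeRel C N)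
    (hQ : SatisfiesTitsAlternativeRel C Q) :
    SatisfiesTitsAlternativeRel C G := by
  intro H
  set φ : ↥H →* Q := π.comp H.subtype with hφ
  rcases hQ φ.range with hCr | hfree
  · -- image in C; look at the kernel
    set M : Subgroup N := H.comap ι with hM
    -- map from M into H
    have hmem : ∀ x : ↥M, ι (x : N) ∈ H := fun x => x.2
    let ψ : ↥M →* ↥H := MonoidHom.mk' (fun x => ⟨ι x, hmem x⟩)
      (by intro x y; ext; simp)
    have hψinj : Function.Injective ψ := by
      intro x y hxy
      have : ι (x : N) = ι (y : N) := congrArg Subtype.val hxy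
      exact Subtype.ext (hι this)
    rcases hN M with hCM | hfreeM
    · left
      -- ψ has range = φ.ker, giving M ≃* φ.ker
      have hrange : ∀ h : ↥H, h ∈ φ.ker ↔ ∃ x : ↥M, ψ x = h := by
        intro h
        constructor
        · intro hh
          have : (h : G) ∈ π.ker := hh
          rw [← hexact] at this
          obtain ⟨n, hn⟩ := this
          have hnM : n ∈ M := by simpa [hM, hn] using h.2
          exact ⟨⟨n, hnM⟩, Subtype.ext hn⟩
        · rintro ⟨x, rfl⟩
          show π (ι (x : N)) = 1
          have : ι (x : N) ∈ π.ker := hexact ▸ ⟨x, rfl⟩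
          exact this
      -- build equiv M ≃* φ.ker
      let ψ' : ↥M →* ↥φ.ker := ψ.codRestrict φ.ker (fun x => (hrange (ψ x)).2 ⟨x, rfl⟩)
      have hψ'bij : Function.Bijective ψ' := by
        constructor
        · intro x y hxy
          apply hψinj
          exact congrArg Subtype.val hxy
        · rintro ⟨h, hh⟩
          obtain ⟨x, hx⟩ := (hrange h).1 hh
          exact ⟨x, Subtype.ext hx⟩
      have e : ↥M ≃* ↥φ.ker := MulEquiv.ofBijective ψ' hψ'bij
      have hCK : C ↥φ.ker := hiso _ _ e hCM
      have e2 : (↥H ⧸ φ.ker) ≃* ↥φ.range := QuotientGroup.quotientKerEquivRange φ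
      exact hext ↥H φ.ker hCK (hiso _ _ e2.symm hCr)
    · right
      exact hfreeM.of_injective ψ hψinj
  · right
    exact hfree.of_surjective φ.rangeRestrict φ.rangeRestrict_surjective
end

section
/- If G is a group and Out(G) is its outer automorphism group, and both G and Out(G) satisfy the Tits alternative relative to a class C of groups that is stable under isomorphisms and extensions, then Aut(G) satisfies the Tits alternative relative to C. -/
/-- The subgroup of inner automorphisms of `G` inside `Aut(G) = MulAut G`. -/
def innAuts (G : Type u) [Group G] : Subgroup (MulAut G) :=
  (MulAut.conj (G := G)).range

/-- The inner automorphisms form a normal subgroup of `Aut(G)`. -/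
instance innAuts_normal (G : Type u) [Group G] : (innAuts G).Normal := by
  constructor
  rintro n ⟨g, rfl⟩ φ
  refine ⟨φ g, ?_⟩
  ext x
  simp [MulAut.conj]

/-!
For `H ≤ Aut(G)`, the subgroup `H ∩ Inn(G)` is normal in `H` with quotient the image of `H` in
`Out(G)`, and it is the image under `g ↦ conj g` of `K = {g | conj g ∈ H} ≤ G`, with central
kernel. Membership in `C` passes from `K` to this image (quotients) and then to `H` (extensions).
A free subgroup of `Out(G)` lifts to `H` since `F₂` is free, and one of `K` maps injectively to
`H ∩ Inn(G)` since `F₂` has trivial centre.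
-/

universe u

namespace FreeGroup

theorem center_eq_bot {α : Type*} [Nontrivial α] : Subgroup.center (FreeGroup α) = ⊥ := by
  classical
  refine (Subgroup.eq_bot_iff_forall _).2 fun w hw => ?_
  obtain ⟨L, hLred, rfl⟩ : ∃ L, IsReduced L ∧ mk L = w := ⟨w.toWord, isReduced_toWord, mk_toWord⟩
  by_contra hne
  have hL : L ≠ [] := by rintro rfl; exact hne rfl
  obtain ⟨a, ha⟩ := exists_ne (L.head hL).1
  -- `c` cancels neither the first letter of `L` nor, as `c⁻¹`, the last one.
  set c : α × Bool := (a, !(L.getLast hL).2)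
  have hred : IsReduced ([c] ++ L ++ [(c.1, !c.2)]) := by
    refine IsReduced.append_overlap (List.isChain_append.2 ⟨IsReduced.singleton, hLred, ?_⟩)
      (List.isChain_append.2 ⟨hLred, IsReduced.singleton, ?_⟩) hL
    · simp [List.head?_eq_some_head hL, c, ha]
    · simp [List.getLast?_eq_some_getLast hL, c]
  have hconj : mk L = mk ([c] ++ L ++ [(c.1, !c.2)]) := by
    rw [← mul_inv_cancel_right (mk L) (mk [c]), ← Subgroup.mem_center_iff.1 hw, inv_mk,
      mul_mk, mul_mk]
    rfl
  have hword := congrArg toWord hconj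
  rw [toWord_mk, toWord_mk, hLred.reduce_eq, hred.reduce_eq] at hword
  have hlen := congrArg List.length hword
  simp only [List.length_append, List.length_singleton] at hlen
  omega

end FreeGroup

namespace HasFreeSubgroupRankTwo

variable {A B : Type*} [Group A] [Group B]

theorem of_subgroup {K : Subgroup A} (hK : HasFreeSubgroupRankTwo K) :
    HasFreeSubgroupRankTwo A := by
  obtain ⟨f, hf⟩ := hK
  exact ⟨K.subtype.comp f, K.subtype_injective.comp hf⟩

theorem of_surjective_s4 (φ : A →* B) (hφ : Function.Surjective φ)
    (hB : HasFreeSubgroupRankTwo B) : HasFreeSubgroupRankTwo A := by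
  obtain ⟨f, hf⟩ := hB
  choose s hs using fun i => hφ (f (FreeGroup.of i))
  have hcomp : φ.comp (FreeGroup.lift s) = f := by ext i; simp [hs]
  refine ⟨FreeGroup.lift s, fun x y hxy => hf ?_⟩
  rw [← hcomp, MonoidHom.comp_apply, MonoidHom.comp_apply, hxy]

theorem map_of_ker_le_center (φ : A →* B) (hφ : φ.ker ≤ Subgroup.center A)
    (hA : HasFreeSubgroupRankTwo A) : HasFreeSubgroupRankTwo B := by
  obtain ⟨f, hf⟩ := hA
  refine ⟨φ.comp f, (injective_iff_map_eq_one _).2 fun w hw => ?_⟩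
  have hcentral : w ∈ Subgroup.center (FreeGroup (Fin 2)) :=
    Subgroup.mem_center_iff.2 fun u => hf <| by
      rw [_root_.map_mul, _root_.map_mul, Subgroup.mem_center_iff.1 (hφ hw)]
  rwa [FreeGroup.center_eq_bot, Subgroup.mem_bot] at hcentral

end HasFreeSubgroupRankTwo

section TitsAlternative

variable {C : (H : Type u) → [Group H] → Prop}

theorem or_hasFreeSubgroupRankTwo_of_surjective
    (hiso : ∀ (A B : Type u) [Group A] [Group B], (A ≃* B) → C A → C B)
    (hext : ∀ (A : Type u) [Group A] (N : Subgroup A) [N.Normal], C N → C (A ⧸ N) → C A)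
    {A B : Type u} [Group A] [Group B] (φ : A →* B) (hφ : Function.Surjective φ)
    (hker : C φ.ker ∨ HasFreeSubgroupRankTwo φ.ker) (hB : C B ∨ HasFreeSubgroupRankTwo B) :
    C A ∨ HasFreeSubgroupRankTwo A := by
  rcases hker with hker | hker
  · rcases hB with hB | hB
    · exact .inl <| hext A φ.ker hker <|
        hiso _ _ (QuotientGroup.quotientKerEquivOfSurjective φ hφ).symm hB
    · exact .inr <| .of_surjective φ hφ hB
  · exact .inr <| .of_subgroup hker

theorem or_hasFreeSubgroupRankTwo_range_of_ker_le_center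
    (hiso : ∀ (A B : Type u) [Group A] [Group B], (A ≃* B) → C A → C B)
    (hquot : ∀ (A : Type u) [Group A] (N : Subgroup A) [N.Normal], C A → C (A ⧸ N))
    {A B : Type u} [Group A] [Group B] (φ : A →* B) (hφ : φ.ker ≤ Subgroup.center A)
    (hA : C A ∨ HasFreeSubgroupRankTwo A) :
    C φ.range ∨ HasFreeSubgroupRankTwo φ.range := by
  rcases hA with hA | hA
  · exact .inl <| hiso _ _ (QuotientGroup.quotientKerEquivRange φ) (hquot A φ.ker hA)
  · exact .inr <| .map_of_ker_le_center φ.rangeRestrict (φ.ker_rangeRestrict ▸ hφ) hA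

end TitsAlternative

/-- If `C` is stable under isomorphisms, extensions and quotients, and both `G` and
`Out(G) = Aut(G)/Inn(G)` satisfy the Tits alternative relative to `C`, then `Aut(G)`
satisfies the Tits alternative relative to `C`. -/
theorem titsAlternative_aut
    (C : (H : Type u) → [inst : Group H] → Prop)
    (hiso : ∀ (A B : Type u) [Group A] [Group B], (A ≃* B) → C A → C B)
    (hext : ∀ (A : Type u) [Group A] (N : Subgroup A) [N.Normal],
      C N → C (A ⧸ N) → C A)
    (hquot : ∀ (A : Type u) [Group A] (N : Subgroup A) [N.Normal], C A → C (A ⧸ N))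
    (G : Type u) [Group G]
    (hG : SatisfiesTitsAlternativeRel C G)
    (hOut : SatisfiesTitsAlternativeRel C (MulAut G ⧸ innAuts G)) :
    SatisfiesTitsAlternativeRel C (MulAut G) := by
  intro H
  let toOut : H →* MulAut G ⧸ innAuts G := (QuotientGroup.mk' (innAuts G)).comp H.subtype
  let conjInH : H.comap MulAut.conj →* H :=
    (MulAut.conj.comp (H.comap MulAut.conj).subtype).codRestrict H fun k => k.2
  have hcentral : conjInH.ker ≤ Subgroup.center _ := fun k hk =>
    Subgroup.mem_center_iff.2 fun x => Subtype.ext <|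
      (mul_inv_eq_iff_eq_mul.1 (congrArg (fun h : H => (h : MulAut G) x) hk)).symm
  have hrange : conjInH.range = toOut.ker := by
    ext ⟨h, hH⟩
    rw [MonoidHom.mem_ker, MonoidHom.comp_apply, QuotientGroup.mk'_apply,
      QuotientGroup.eq_one_iff]
    constructor
    · rintro ⟨k, hk⟩
      exact ⟨k, congrArg Subtype.val hk⟩
    · rintro ⟨g, rfl⟩
      exact ⟨⟨g, hH⟩, rfl⟩
  refine or_hasFreeSubgroupRankTwo_of_surjective hiso hext toOut.rangeRestrict
    toOut.rangeRestrict_surjective ?_ (hOut toOut.range)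
  rw [MonoidHom.ker_rangeRestrict, ← hrange]
  exact or_hasFreeSubgroupRankTwo_range_of_ker_le_center hiso hquot conjInH hcentral (hG _)
end

section
/- In a free product G = A * B with A and B nontrivial, the free factor A is equal to its own normalizer in G. -/
/-!
Pass to the indexed free product `∗ᵢ Gᵢ` and its reduced words. Fix `m ≠ 1` in `Gᵢ`.
By induction on the reduced word of `g`, either `g ∈ Gᵢ`, or `g (of m) g⁻¹` is the product
of a reduced word of length at least two: conjugating by a letter outside `Gᵢ` wraps the
word in that letter and its inverse without cancellation. Such a product is never a single
letter, so it does not lie in `Gᵢ`.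
-/

open Monoid

namespace Monoid.CoprodI

variable {ι : Type*} {G : ι → Type*} [∀ i, Group (G i)]

theorem Word.prod_injective : Function.Injective (Word.prod : Word G → CoprodI G) := by
  classical
  exact Word.equiv.symm.injective

theorem NeWord.prod_notMem_range_of {j k : ι} (v : NeWord G j k) (hv : 2 ≤ v.toList.length)
    (i : ι) : v.prod ∉ (of : G i →* CoprodI G).range := by
  rintro ⟨m, hm⟩
  by_cases h1 : m = 1
  · have : v.toWord = Word.empty :=
      Word.prod_injective (by rw [Word.prod_empty, ← NeWord.prod, ← hm, h1, map_one])
    have := congrArg (·.toList.length) this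
    change v.toList.length = 0 at this
    omega
  · have : v.toWord = (NeWord.singleton m h1).toWord :=
      Word.prod_injective (by rw [← NeWord.prod, ← NeWord.prod, NeWord.prod_singleton, hm])
    have := congrArg (·.toList.length) this
    change v.toList.length = 1 at this
    omega

theorem NeWord.exists_prod_eq_conj {j l k : ι} (v : NeWord G j l) (m : G k) (hm : m ≠ 1)
    (hkj : k ≠ j) (hlk : l ≠ k) :
    ∃ v' : NeWord G k k, v'.toList.length = v.toList.length + 2 ∧
      v'.prod = of m * v.prod * (of m)⁻¹ :=
  ⟨(NeWord.singleton m hm).append hkj (v.append hlk (NeWord.singleton m⁻¹ (inv_ne_one.2 hm))),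
    by simp only [NeWord.toList, List.length_append, List.length_singleton]; omega,
    by simp only [NeWord.append_prod, NeWord.prod_singleton, map_inv, mul_assoc]⟩

theorem Word.prod_mem_range_of_or_exists_conj_eq {i : ι} (m : G i) (hm : m ≠ 1) (w : Word G) :
    w.prod ∈ (of : G i →* CoprodI G).range ∨
      ∃ (j : ι) (v : NeWord G j j), w.fstIdx = some j ∧ 2 ≤ v.toList.length ∧
        v.prod = w.prod * of m * w.prod⁻¹ := by
  induction w using Word.consRecOn with
  | empty => exact Or.inl ⟨1, by simp⟩
  | cons k m₀ t ht hm₀ ih =>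
    rw [Word.prod_cons, Word.fstIdx_cons]
    rcases ih with ⟨a, ha⟩ | ⟨j, v, hj, hv, hvprod⟩
    · by_cases hki : k = i
      · subst hki
        exact Or.inl ⟨m₀ * a, by rw [map_mul, ha]⟩
      · obtain ⟨v', hlen, hprod⟩ :=
          (NeWord.singleton (a * m * a⁻¹) (by simp [hm])).exists_prod_eq_conj m₀ hm₀ hki
            (Ne.symm hki)
        refine Or.inr ⟨k, v', rfl, by simp [hlen], ?_⟩
        rw [hprod, NeWord.prod_singleton, ← ha]
        simp only [map_mul, map_inv]
        group
    · have hkj : k ≠ j := by rintro rfl; exact ht hj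
      obtain ⟨v', hlen, hprod⟩ := v.exists_prod_eq_conj m₀ hm₀ hkj (Ne.symm hkj)
      refine Or.inr ⟨k, v', rfl, by omega, ?_⟩
      rw [hprod, hvprod]
      group

theorem normalizer_range_of (i : ι) [Nontrivial (G i)] :
    Subgroup.normalizer ((of : G i →* CoprodI G).range : Set (CoprodI G)) =
      (of : G i →* CoprodI G).range := by
  classical
  refine le_antisymm (fun g hg => ?_) Subgroup.le_normalizer
  obtain ⟨m, hm⟩ := exists_ne (1 : G i)
  have hconj : g * of m * g⁻¹ ∈ (of : G i →* CoprodI G).range :=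
    (Subgroup.mem_normalizer_iff.mp hg _).mp ⟨m, rfl⟩
  have hg : (Word.equiv g).prod = g := Word.equiv.symm_apply_apply g
  rcases (Word.equiv g).prod_mem_range_of_or_exists_conj_eq m hm with h | ⟨j, v, -, hv, hvprod⟩
  · rwa [hg] at h
  · rw [hg] at hvprod
    exact absurd (hvprod ▸ hconj) (v.prod_notMem_range_of hv i)

end Monoid.CoprodI

namespace Monoid.Coprod

universe u v

variable (A : Type u) (B : Type v) [Group A] [Group B]

-- `ULift` puts both factors in one universe, as `CoprodI` needs.
abbrev summands : Bool → Type (max u v) := fun b => cond b (ULift A) (ULift B)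

instance : ∀ b, Group (summands A B b)
  | true => inferInstanceAs (Group (ULift A))
  | false => inferInstanceAs (Group (ULift B))

def mulEquivCoprodI : Coprod A B ≃* CoprodI (summands A B) :=
  MonoidHom.toMulEquiv
    (Coprod.lift ((CoprodI.of (i := true)).comp MulEquiv.ulift.symm.toMonoidHom)
      ((CoprodI.of (i := false)).comp MulEquiv.ulift.symm.toMonoidHom))
    (CoprodI.lift fun b => Bool.rec (motive := fun b => summands A B b →* Coprod A B)
      (Coprod.inr.comp MulEquiv.ulift.toMonoidHom) (Coprod.inl.comp MulEquiv.ulift.toMonoidHom) b)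
    (Coprod.hom_ext rfl rfl)
    (CoprodI.ext_hom _ _ fun b => by cases b <;> rfl)

theorem range_inl_eq_comap_range_of :
    (Coprod.inl : A →* Coprod A B).range =
      ((CoprodI.of (i := true)).range).comap (mulEquivCoprodI A B).toMonoidHom := by
  ext x
  constructor
  · rintro ⟨a, rfl⟩
    exact ⟨ULift.up a, rfl⟩
  · rintro ⟨a, ha⟩
    exact ⟨a.down, (mulEquivCoprodI A B).injective ha⟩

end Monoid.Coprod

theorem freeFactor_self_normalizer_general (A B : Type*) [Group A] [Group B]
    [Nontrivial A] :
    Subgroup.normalizer ((Coprod.inl : A →* Coprod A B).range : Set (Coprod A B))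
      = (Coprod.inl : A →* Coprod A B).range := by
  have : Nontrivial (Coprod.summands A B true) := inferInstanceAs (Nontrivial (ULift A))
  rw [Coprod.range_inl_eq_comap_range_of, ← Subgroup.comap_normalizer_eq_of_surjective _
    (f := (Coprod.mulEquivCoprodI A B).toMonoidHom) (Coprod.mulEquivCoprodI A B).surjective,
    CoprodI.normalizer_range_of]

/-- In a free product `G = A ∗ B` with `A` and `B` nontrivial, the free factor `A`
is equal to its own normalizer in `G`. -/
theorem freeFactor_self_normalizer (A B : Type*) [Group A] [Group B]
    [Nontrivial A] [Nontrivial B] :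
    Subgroup.normalizer ((Coprod.inl : A →* Coprod A B).range : Set (Coprod A B))
      = (Coprod.inl : A →* Coprod A B).range :=
  freeFactor_self_normalizer_general A B
end

section
/- Let μ be a probability measure on a countable group G, let ν be a μ-stationary probability measure on a G-space X, let D be a countable G-set, and let Θ: X → D be a measurable G-equivariant map. If E ⊆ X is a G-invariant measurable subset with ν(E) > 0, then Θ(E) contains a finite orbit of the subgroup of G generated by the support of μ. -/
open MeasureTheory Pointwise
open scoped ENNReal

/-!
A maximum principle. Pushing `ν` restricted to `E` forward along `Θ` gives a finite
`μ`-stationary measure `f` on the discrete set `D`, not identically zero because `D` is countable.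
Having finite total mass, `f` attains its maximum `m > 0`, and the level set `{f = m}` is finite.
At a point of that level set, `m = ∑ μ g f(g⁻¹ d)` is an average of values `≤ m`, so
`f(g⁻¹ d) = m` for every `g` in the support of `μ`. Hence the finite level set is invariant under
the group generated by the support, and every point of it has a finite orbit inside `Θ(E)`.
-/

theorem ENNReal.exists_forall_le_of_tsum_ne_top {ι : Type*} [Nonempty ι] {f : ι → ℝ≥0∞}
    (hf : ∑' i, f i ≠ ∞) : ∃ i, ∀ j, f j ≤ f i := by
  by_cases hzero : ∀ i, f i = 0
  · exact ⟨Classical.arbitrary ι, fun j => (hzero j).le.trans zero_le⟩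
  obtain ⟨i₀, hi₀⟩ := not_forall.mp hzero
  obtain ⟨i, hi₀i, hmax⟩ := Set.exists_max_image {i | f i₀ ≤ f i} f
    (ENNReal.finite_const_le_of_tsum_ne_top hf hi₀) ⟨i₀, le_refl (f i₀)⟩
  refine ⟨i, fun j => ?_⟩
  by_cases hj : f i₀ ≤ f j
  · exact hmax j hj
  · exact (not_le.mp hj).le.trans hi₀i

section Discrete

variable {G D : Type*} [Group G] [MulAction G D]

theorem Subgroup.closure_le_stabilizer_of_finite {S : Set D} (hS : S.Finite) {T : Set G}
    (hT : ∀ g ∈ T, g⁻¹ • S ⊆ S) : Subgroup.closure T ≤ MulAction.stabilizer G S := by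
  rw [Subgroup.closure_le]
  intro g hg
  have hinv : g⁻¹ • S = S :=
    Set.eq_of_subset_of_ncard_le (hT g hg) (Set.ncard_smul_set g⁻¹ S).ge hS
  simpa using inv_mem (show g⁻¹ ∈ MulAction.stabilizer G S from hinv)

theorem MulAction.orbit_subset_of_le_stabilizer {H : Subgroup G} {S : Set D}
    (hH : H ≤ MulAction.stabilizer G S) {d : D} (hd : d ∈ S) : MulAction.orbit H d ⊆ S := by
  rintro _ ⟨⟨g, hg⟩, rfl⟩
  have hgS : g • S = S := hH hg
  exact hgS ▸ Set.smul_mem_smul_set hd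

variable {μ : G → ℝ≥0∞} {f : D → ℝ≥0∞}

theorem apply_inv_smul_eq_of_forall_le {d : D} (hμ : ∑' g, μ g ≤ 1)
    (hd : f d = ∑' g, μ g * f (g⁻¹ • d)) (hmax : ∀ e, f e ≤ f d) (htop : f d ≠ ∞)
    {g : G} (hg : μ g ≠ 0) : f (g⁻¹ • d) = f d := by
  by_contra hne
  have hμg : μ g ≠ ∞ := ne_top_of_le_ne_top ENNReal.one_ne_top ((ENNReal.le_tsum g).trans hμ)
  have hlt : ∑' g', μ g' * f (g'⁻¹ • d) < ∑' g', μ g' * f d :=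
    ENNReal.tsum_lt_tsum (hd ▸ htop) (fun g' => mul_le_mul_right (hmax _) _)
      (ENNReal.mul_lt_mul_right hg hμg ((hmax _).lt_of_ne hne))
  rw [← hd, ENNReal.tsum_mul_right] at hlt
  exact (hlt.trans_le (mul_le_of_le_one_left' hμ)).false

theorem exists_finite_orbit_subset_support_of_stationary (hμ : ∑' g, μ g ≤ 1)
    (hf : ∀ d, f d = ∑' g, μ g * f (g⁻¹ • d)) (hsum : ∑' d, f d ≠ ∞) (hne : f ≠ 0) :
    ∃ d, (MulAction.orbit (Subgroup.closure {g | μ g ≠ 0}) d).Finite ∧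
      MulAction.orbit (Subgroup.closure {g | μ g ≠ 0}) d ⊆ Function.support f := by
  obtain ⟨d₀, hd₀⟩ := Function.ne_iff.mp hne
  have : Nonempty D := ⟨d₀⟩
  obtain ⟨d, hmax⟩ := ENNReal.exists_forall_le_of_tsum_ne_top hsum
  have hfd : f d ≠ 0 := ne_bot_of_le_ne_bot hd₀ (hmax d₀)
  set S := {e | f e = f d}
  have hS : S.Finite :=
    (ENNReal.finite_const_le_of_tsum_ne_top hsum hfd).subset fun e he => he.ge
  have hstab : Subgroup.closure {g | μ g ≠ 0} ≤ MulAction.stabilizer G S :=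
    Subgroup.closure_le_stabilizer_of_finite hS fun g hg => by
      rintro _ ⟨e, he, rfl⟩
      have hmax' : ∀ e', f e' ≤ f e := fun e' => (hmax e').trans_eq he.symm
      exact (apply_inv_smul_eq_of_forall_le hμ (hf e) hmax' (ENNReal.ne_top_of_tsum_ne_top hsum e)
        hg).trans he
  have horb := MulAction.orbit_subset_of_le_stabilizer hstab (show d ∈ S from rfl)
  exact ⟨d, hS.subset horb, fun e he => by rwa [Function.mem_support, show f e = f d from horb he]⟩

end Discrete

namespace MeasureTheory.Measure

variable {G X D : Type*} [Group G] [MulAction G X] [MulAction G D] [MeasurableSpace X]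
  {μ : G → ℝ≥0∞} {ν : Measure X}

def IsStationary (ν : Measure X) (μ : G → ℝ≥0∞) : Prop :=
  ∀ A : Set X, MeasurableSet A → ν A = ∑' g : G, μ g * ν ((fun x => g • x) ⁻¹' A)

theorem IsStationary.restrict (hν : ν.IsStationary μ) {E : Set X} (hE : MeasurableSet E)
    (hinv : ∀ (g : G) (x : X), x ∈ E → g • x ∈ E) : (ν.restrict E).IsStationary μ := by
  intro A hA
  have hpre : ∀ g : G, (fun x => g • x) ⁻¹' E = E := fun g =>
    Set.ext fun x => ⟨fun hx => by simpa using hinv g⁻¹ _ hx, hinv g x⟩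
  rw [Measure.restrict_apply hA, hν _ (hA.inter hE)]
  simp only [Measure.restrict_apply' hE, Set.preimage_inter, hpre]

theorem IsStationary.measure_preimage_singleton (hν : ν.IsStationary μ) {Θ : X → D}
    (hΘ : ∀ d, MeasurableSet (Θ ⁻¹' {d})) (hequiv : ∀ (g : G) (x : X), Θ (g • x) = g • Θ x)
    (d : D) : ν (Θ ⁻¹' {d}) = ∑' g, μ g * ν (Θ ⁻¹' {g⁻¹ • d}) := by
  rw [hν _ (hΘ d)]
  congr! 4 with g
  ext x
  simp [hequiv, eq_inv_smul_iff]

theorem IsStationary.exists_finite_orbit [IsFiniteMeasure ν] [Countable D]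
    (hμ : ∑' g, μ g ≤ 1) (hν : ν.IsStationary μ) (hν0 : ν ≠ 0) {Θ : X → D}
    (hΘ : ∀ d, MeasurableSet (Θ ⁻¹' {d})) (hequiv : ∀ (g : G) (x : X), Θ (g • x) = g • Θ x) :
    ∃ d, (MulAction.orbit (Subgroup.closure {g | μ g ≠ 0}) d).Finite ∧
      MulAction.orbit (Subgroup.closure {g | μ g ≠ 0}) d ⊆ {e | ν (Θ ⁻¹' {e}) ≠ 0} := by
  refine exists_finite_orbit_subset_support_of_stationary hμ
    (hν.measure_preimage_singleton hΘ hequiv) ?_ ?_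
  · exact ((tsum_meas_le_meas_iUnion_of_disjoint ν hΘ (pairwise_disjoint_fiber Θ)).trans_lt
      (measure_lt_top ν _)).ne
  · intro hzero
    refine hν0 (measure_univ_eq_zero.mp ?_)
    rw [← Set.preimage_univ (f := Θ), measure_preimage_eq_zero_iff_of_countable Set.countable_univ]
    exact fun d _ => congrFun hzero d

end MeasureTheory.Measure

theorem stationary_measure_finite_orbit_general
    {G X D : Type*} [Group G]
    [MeasurableSpace X] [MulAction G X]
    [MulAction G D] [Countable D]
    (μ : G → ENNReal) (hμ : ∑' g : G, μ g = 1)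
    (ν : Measure X) [IsProbabilityMeasure ν]
    (hstat : ∀ A : Set X, MeasurableSet A →
      ν A = ∑' g : G, μ g * ν ((fun x => g • x) ⁻¹' A))
    (Θ : X → D) (hΘ : ∀ d : D, MeasurableSet (Θ ⁻¹' {d}))
    (hequiv : ∀ (g : G) (x : X), Θ (g • x) = g • Θ x)
    (E : Set X) (hE : MeasurableSet E)
    (hinv : ∀ (g : G) (x : X), x ∈ E → g • x ∈ E)
    (hpos : 0 < ν E) :
    ∃ d : D, d ∈ Θ '' E ∧
      (MulAction.orbit (Subgroup.closure {g : G | μ g ≠ 0}) d).Finite ∧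
      MulAction.orbit (Subgroup.closure {g : G | μ g ≠ 0}) d ⊆ Θ '' E := by
  have hνE : ν.restrict E ≠ 0 := Measure.restrict_eq_zero.not.mpr hpos.ne'
  obtain ⟨d, hfin, horb⟩ :=
    (Measure.IsStationary.restrict hstat hE hinv).exists_finite_orbit hμ.le hνE hΘ hequiv
  have hsupp : {e | ν.restrict E (Θ ⁻¹' {e}) ≠ 0} ⊆ Θ '' E := fun e he => by
    rw [Set.mem_ofPred_eq, Measure.restrict_apply (hΘ e)] at he
    obtain ⟨x, hxe, hxE⟩ := nonempty_of_measure_ne_zero he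
    exact ⟨x, hxE, hxe⟩
  exact ⟨d, hsupp (horb (MulAction.mem_orbit_self d)), hfin, horb.trans hsupp⟩

/-- Ballmann's maximum-principle lemma: if `μ` is a probability measure on a countable
group `G` (given by its weights), `ν` a `μ`-stationary probability measure on a `G`-space
`X`, `D` a countable `G`-set and `Θ : X → D` a measurable `G`-equivariant map, then for
every `G`-invariant measurable set `E ⊆ X` with `ν(E) > 0`, the image `Θ(E)` contains a
finite orbit of the subgroup generated by the support of `μ`. -/
theorem stationary_measure_finite_orbit
    {G X D : Type*} [Group G] [Countable G]
    [MeasurableSpace X] [MulAction G X]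
    (hmeas : ∀ g : G, Measurable fun x : X => g • x)
    [MulAction G D] [Countable D]
    (μ : G → ENNReal) (hμ : ∑' g : G, μ g = 1)
    (ν : Measure X) [IsProbabilityMeasure ν]
    (hstat : ∀ A : Set X, MeasurableSet A →
      ν A = ∑' g : G, μ g * ν ((fun x => g • x) ⁻¹' A))
    (Θ : X → D) (hΘ : ∀ d : D, MeasurableSet (Θ ⁻¹' {d}))
    (hequiv : ∀ (g : G) (x : X), Θ (g • x) = g • Θ x)
    (E : Set X) (hE : MeasurableSet E)
    (hinv : ∀ (g : G) (x : X), x ∈ E → g • x ∈ E)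
    (hpos : 0 < ν E) :
    ∃ d : D, d ∈ Θ '' E ∧
      (MulAction.orbit (Subgroup.closure {g : G | μ g ≠ 0}) d).Finite ∧
      MulAction.orbit (Subgroup.closure {g : G | μ g ≠ 0}) d ⊆ Θ '' E :=
  stationary_measure_finite_orbit_general μ hμ ν hstat Θ hΘ hequiv E hE hinv hpos
end

section
/- Let Γ be a finite simplicial graph with right-angled Artin group A_Γ, and define for vertices v, w the relation v ≤ w if lk(v) ⊆ st(w). Then the relation ≤ is transitive on vertices of Γ. -/
lemma SimpleGraph.mem_insert_neighborSet_of_adj {V : Type*} (Γ : SimpleGraph V) {u v w : V}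
    (huv : Γ.neighborSet u ⊆ insert v (Γ.neighborSet v))
    (hvw : Γ.neighborSet v ⊆ insert w (Γ.neighborSet w)) (hadj : Γ.Adj u v) :
    v ∈ insert w (Γ.neighborSet w) := by
  rcases hvw hadj.symm with rfl | huw
  · exact Or.inr hadj
  · rcases huv huw.symm with rfl | hwv
    · exact Or.inl rfl
    · exact Or.inr hwv.symm

theorem link_star_relation_transitive_general {V : Type*} (Γ : SimpleGraph V)
    (u v w : V)
    (huv : Γ.neighborSet u ⊆ insert v (Γ.neighborSet v))
    (hvw : Γ.neighborSet v ⊆ insert w (Γ.neighborSet w)) :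
    Γ.neighborSet u ⊆ insert w (Γ.neighborSet w) := by
  intro x hx
  rcases huv hx with rfl | hxv
  · exact Γ.mem_insert_neighborSet_of_adj huv hvw hx
  · exact hvw hxv

/-- In a finite simplicial graph, with `lk(v)` the link (neighbor set) of a vertex `v` and
`st(v) = {v} ∪ lk(v)` its star, the relation `v ≤ w` defined by `lk(v) ⊆ st(w)` is
transitive (Charney–Vogtmann). -/
theorem link_star_relation_transitive {V : Type*} [Fintype V] (Γ : SimpleGraph V)
    (u v w : V)
    (huv : Γ.neighborSet u ⊆ insert v (Γ.neighborSet v))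
    (hvw : Γ.neighborSet v ⊆ insert w (Γ.neighborSet w)) :
    Γ.neighborSet u ⊆ insert w (Γ.neighborSet w) :=
  link_star_relation_transitive_general Γ u v w huv hvw
end
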